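/- In the setting of the variational lower bound — S countable, q, p probability mass functions on S with p(s) = r(s)·q(s), f : ℝ → ℝ strictly convex and differentiable, r_ψ : S → ℝ, with the stated summability assumptions — equality ∑_s p(s)·f′(r_ψ(s)) − ∑_s q(s)·[r_ψ(s)·f′(r_ψ(s)) − f(r_ψ(s))] = ∑_s q(s)·f(r(s)) holds if and only if r_ψ(s) = r(s) for every s ∈ S with q(s) > 0. -/

import Mathlib

/-!
Since `p = r q`, the gap `E_q[f(r)]` minus the variational objective is the series
`∑ q(s) B(r(s), r_ψ(s))` of the Bregman divergence `B(x, y) = f x - f y - f'(y) (x - y)`.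
Strict convexity makes `B(x, y) > 0` for `x ≠ y`, and a convergent series of nonnegative
terms vanishes iff every term does, i.e. iff `r_ψ = r` wherever `q > 0`.
-/

open Set

def bregmanDiv (f f' : ℝ → ℝ) (x y : ℝ) : ℝ := f x - f y - f' y * (x - y)

section Bregman

variable {f f' : ℝ → ℝ} {x y : ℝ}

@[simp]
lemma bregmanDiv_self : bregmanDiv f f' x x = 0 := by
  simp [bregmanDiv]

lemma StrictConvexOn.bregmanDiv_pos {s : Set ℝ} (hf : StrictConvexOn ℝ s f) (hx : x ∈ s)
    (hy : y ∈ s) (hxy : x ≠ y) (hderiv : HasDerivAt f (f' y) y) :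
    0 < bregmanDiv f f' x y := by
  rw [bregmanDiv, sub_sub, sub_pos]
  rcases hxy.lt_or_gt with hlt | hgt
  · have hslope := hf.slope_lt_of_hasDerivAt hx hy hlt hderiv
    rw [slope_def_field, div_lt_iff₀ (sub_pos.mpr hlt)] at hslope
    linarith
  · have hslope := hf.lt_slope_of_hasDerivAt hy hx hgt hderiv
    rw [slope_def_field, lt_div_iff₀ (sub_pos.mpr hgt)] at hslope
    linarith

lemma ConvexOn.bregmanDiv_nonneg {s : Set ℝ} (hf : ConvexOn ℝ s f) (hx : x ∈ s)
    (hy : y ∈ s) (hderiv : HasDerivAt f (f' y) y) :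
    0 ≤ bregmanDiv f f' x y := by
  rw [bregmanDiv, sub_sub, sub_nonneg]
  rcases lt_trichotomy x y with hlt | rfl | hgt
  · have hslope := hf.slope_le_of_hasDerivAt hx hy hlt hderiv
    rw [slope_def_field, div_le_iff₀ (sub_pos.mpr hlt)] at hslope
    linarith
  · simp
  · have hslope := hf.le_slope_of_hasDerivAt hy hx hgt hderiv
    rw [slope_def_field, le_div_iff₀ (sub_pos.mpr hgt)] at hslope
    linarith

lemma StrictConvexOn.bregmanDiv_eq_zero_iff {s : Set ℝ} (hf : StrictConvexOn ℝ s f)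
    (hx : x ∈ s) (hy : y ∈ s) (hderiv : HasDerivAt f (f' y) y) :
    bregmanDiv f f' x y = 0 ↔ x = y := by
  refine ⟨fun h => ?_, fun h => h ▸ bregmanDiv_self⟩
  by_contra hxy
  exact (hf.bregmanDiv_pos hx hy hxy hderiv).ne' h

end Bregman

lemma hasSum_mul_bregmanDiv {S : Type*} {q p r rpsi : S → ℝ} {f f' : ℝ → ℝ}
    (hpr : ∀ s, p s = r s * q s)
    (h1 : Summable (fun s => q s * f (r s)))
    (h2 : Summable (fun s => p s * f' (rpsi s)))
    (h3 : Summable (fun s => q s * (rpsi s * f' (rpsi s))))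
    (h4 : Summable (fun s => q s * f (rpsi s))) :
    HasSum (fun s => q s * bregmanDiv f f' (r s) (rpsi s))
      (∑' s, q s * f (r s) -
        (∑' s, p s * f' (rpsi s) - ∑' s, q s * (rpsi s * f' (rpsi s) - f (rpsi s)))) := by
  have h34 : Summable (fun s => q s * (rpsi s * f' (rpsi s) - f (rpsi s))) := by
    simpa only [mul_sub] using h3.sub h4
  have hterms : (fun s => q s * f (r s) - p s * f' (rpsi s)
      + q s * (rpsi s * f' (rpsi s) - f (rpsi s))) =
      fun s => q s * bregmanDiv f f' (r s) (rpsi s) := by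
    funext s
    rw [bregmanDiv, hpr]
    ring
  rw [← sub_add, ← hterms]
  exact (h1.hasSum.sub h2.hasSum).add h34.hasSum

theorem f_divergence_variational_bound_tight_iff_general
    {S : Type*}
    (q p : S → ℝ) (r rpsi : S → ℝ)
    (hq0 : ∀ s, 0 ≤ q s)
    (hpr : ∀ s, p s = r s * q s)
    (f f' : ℝ → ℝ)
    (hconv : StrictConvexOn ℝ Set.univ f)
    (hderiv : ∀ x, HasDerivAt f (f' x) x)
    (h1 : Summable (fun s => q s * f (r s)))
    (h2 : Summable (fun s => p s * f' (rpsi s)))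
    (h3 : Summable (fun s => q s * (rpsi s * f' (rpsi s))))
    (h4 : Summable (fun s => q s * f (rpsi s))) :
    (∑' s, p s * f' (rpsi s) - ∑' s, q s * (rpsi s * f' (rpsi s) - f (rpsi s))
        = ∑' s, q s * f (r s))
      ↔ ∀ s, 0 < q s → rpsi s = r s := by
  have hgap := hasSum_mul_bregmanDiv hpr h1 h2 h3 h4
  have hnonneg : ∀ s, 0 ≤ q s * bregmanDiv f f' (r s) (rpsi s) := fun s =>
    mul_nonneg (hq0 s) (hconv.convexOn.bregmanDiv_nonneg (mem_univ _) (mem_univ _) (hderiv _))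
  have hterm : ∀ s, q s * bregmanDiv f f' (r s) (rpsi s) = 0 ↔ (0 < q s → rpsi s = r s) := by
    intro s
    rw [mul_eq_zero, hconv.bregmanDiv_eq_zero_iff (mem_univ _) (mem_univ _) (hderiv _),
      eq_comm (a := r s), (hq0 s).lt_iff_ne', imp_iff_not_or, not_not]
  rw [eq_comm, ← sub_eq_zero, ← hgap.tsum_eq, ← hgap.summable.hasSum_iff,
    hasSum_zero_iff_of_nonneg hnonneg, funext_iff]
  exact forall_congr' hterm

/-- Equality condition of the variational bound (Proposition 2, tightness part):
for strictly convex differentiable `f`, the variational objective equals the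
f-divergence `E_q[f(r)]` if and only if `r_ψ = r` on the support of `q`. -/
theorem f_divergence_variational_bound_tight_iff
    {S : Type*} [Countable S]
    (q p : S → ℝ) (r rpsi : S → ℝ)
    (hq0 : ∀ s, 0 ≤ q s) (hq1 : HasSum q 1)
    (hp0 : ∀ s, 0 ≤ p s) (hp1 : HasSum p 1)
    (hpr : ∀ s, p s = r s * q s)
    (f f' : ℝ → ℝ)
    (hconv : StrictConvexOn ℝ Set.univ f)
    (hderiv : ∀ x, HasDerivAt f (f' x) x)
    (h1 : Summable (fun s => q s * f (r s)))
    (h2 : Summable (fun s => p s * f' (rpsi s)))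
    (h3 : Summable (fun s => q s * (rpsi s * f' (rpsi s))))
    (h4 : Summable (fun s => q s * f (rpsi s))) :
    (∑' s, p s * f' (rpsi s) - ∑' s, q s * (rpsi s * f' (rpsi s) - f (rpsi s))
        = ∑' s, q s * f (r s))
      ↔ ∀ s, 0 < q s → rpsi s = r s :=
  f_divergence_variational_bound_tight_iff_general q p r rpsi hq0 hpr f f' hconv hderiv h1 h2 h3 h4
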